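/- arXiv:2603.08758 — 5 statements merged into one kernel-verified Lean document; each statement's English description precedes it below -/
import Mathlib

section
/- Let G be a group acting on a set X and acting transitively on sets M1 and M2. Fix p0 ∈ M1 and q0 ∈ M2, and let H1 := Stab_G(p0) and H2 := Stab_G(q0). Let ρ1 : M1 → G satisfy ρ1(p) · p = p0 for all p ∈ M1, and let ρ2 : M2 → G satisfy ρ2(q) · q = q0 for all q ∈ M2. Define T1 : X × M1 × M2 → X × M2 by T1(x, p, q) := (ρ1(p) · x, ρ1(p) · q) and T2 : X × M1 × M2 → X × M1 by T2(x, p, q) := (ρ2(q) · x, ρ2(q) · p). Then for every H2-invariant function f_{H2} : X × M1 → Y (invariant under the diagonal H2-action), there exists a unique H1-invariant function f_{H1} : X × M2 → Y (invariant under the diagonal H1-action) such that f_{H1}(T1(x, p, q)) = f_{H2}(T2(x, p, q)) for all (x, p, q) ∈ X × M1 × M2. -/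
/-!
Put `f_{H1}(x, q) := f_{H2}(ρ2(q) • x, ρ2(q) • p0)`. Two elements of `G` that both move `q` to `q0`
differ by an element of `H2`, so the `H2`-invariance of `f_{H2}` lets us replace `ρ2(q)` by any
such element; this gives both the `H1`-invariance of `f_{H1}` and the identity
`f_{H1} ∘ T1 = f_{H2} ∘ T2`. Conversely, since `ρ1(p0) ∈ H1`, any `H1`-invariant solution satisfies
`f(x, q) = f(ρ1(p0) • x, ρ1(p0) • q) = f_{H2}(ρ2(q) • x, ρ2(q) • p0)`, which gives uniqueness.
-/

open MulAction

section Reduction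

variable {G X M1 M2 Y : Type*} [Group G] [MulAction G X] [MulAction G M1] [MulAction G M2]

theorem mul_inv_mem_stabilizer_of_smul_eq {a b : G} {q q0 : M2} (ha : a • q = q0)
    (hb : b • q = q0) : a * b⁻¹ ∈ stabilizer G q0 := by
  rw [mem_stabilizer_iff, mul_smul, ← hb, inv_smul_smul, ha, hb]

theorem apply_smul_eq_apply_smul_of_smul_eq {q0 : M2} {f : X × M1 → Y}
    (hf : ∀ h ∈ stabilizer G q0, ∀ (x : X) (p : M1), f (h • x, h • p) = f (x, p))
    {a b : G} {q : M2} (ha : a • q = q0) (hb : b • q = q0) (x : X) (p : M1) :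
    f (a • x, a • p) = f (b • x, b • p) := by
  have hab := mul_inv_mem_stabilizer_of_smul_eq ha hb
  calc f (a • x, a • p) = f ((a * b⁻¹) • b • x, (a * b⁻¹) • b • p) := by
        simp only [smul_smul, inv_mul_cancel_right]
    _ = f (b • x, b • p) := hf _ hab _ _

def reductionTransfer (ρ2 : M2 → G) (p0 : M1) (f : X × M1 → Y) : X × M2 → Y :=
  fun z => f (ρ2 z.2 • z.1, ρ2 z.2 • p0)

theorem reductionTransfer_smul {q0 : M2} {ρ2 : M2 → G} (hρ2 : ∀ q : M2, ρ2 q • q = q0)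
    {f : X × M1 → Y}
    (hf : ∀ h ∈ stabilizer G q0, ∀ (x : X) (p : M1), f (h • x, h • p) = f (x, p))
    (p0 : M1) (g : G) (x : X) (q : M2) :
    reductionTransfer ρ2 p0 f (g • x, g • q) = f (ρ2 q • x, ρ2 q • g⁻¹ • p0) := by
  have hmove : (ρ2 (g • q) * g) • q = q0 := by rw [mul_smul, hρ2]
  calc reductionTransfer ρ2 p0 f (g • x, g • q)
        = f ((ρ2 (g • q) * g) • x, (ρ2 (g • q) * g) • g⁻¹ • p0) := by
          simp only [reductionTransfer, mul_smul, smul_inv_smul]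
    _ = f (ρ2 q • x, ρ2 q • g⁻¹ • p0) :=
          apply_smul_eq_apply_smul_of_smul_eq hf hmove (hρ2 q) _ _

end Reduction

theorem reduction_flexibility_general {G X M1 M2 Y : Type*}
    [Group G] [MulAction G X] [MulAction G M1] [MulAction G M2]
    (p0 : M1) (q0 : M2)
    (ρ1 : M1 → G) (hρ1 : ∀ p : M1, ρ1 p • p = p0)
    (ρ2 : M2 → G) (hρ2 : ∀ q : M2, ρ2 q • q = q0)
    (fH2 : X × M1 → Y)
    (hfH2 : ∀ h ∈ MulAction.stabilizer G q0, ∀ (x : X) (p : M1),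
      fH2 (h • x, h • p) = fH2 (x, p)) :
    ∃! fH1 : X × M2 → Y,
      (∀ h ∈ MulAction.stabilizer G p0, ∀ (x : X) (q : M2),
        fH1 (h • x, h • q) = fH1 (x, q)) ∧
      (∀ (x : X) (p : M1) (q : M2),
        fH1 (ρ1 p • x, ρ1 p • q) = fH2 (ρ2 q • x, ρ2 q • p)) := by
  have hsmul := reductionTransfer_smul hρ2 hfH2 p0
  refine ⟨reductionTransfer ρ2 p0 fH2, ⟨fun h hh x q => ?_, fun x p q => ?_⟩, ?_⟩
  · rw [hsmul, inv_smul_eq_iff.mpr (mem_stabilizer_iff.mp hh).symm]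
    rfl
  · rw [hsmul, inv_smul_eq_iff.mpr (hρ1 p).symm]
  · rintro f ⟨hinv, hint⟩
    funext ⟨x, q⟩
    rw [← hinv _ (hρ1 p0) x q, hint x p0 q]
    rfl

/-- **Flexibility in the choice of reduction.** With `G` acting transitively on `M1` and `M2`,
base points `p0 ∈ M1`, `q0 ∈ M2`, isotropy groups `H1 = Stab_G(p0)`, `H2 = Stab_G(q0)`,
canonicalization maps `ρ1, ρ2`, and maps `T1(x,p,q) = (ρ1(p) • x, ρ1(p) • q)`,
`T2(x,p,q) = (ρ2(q) • x, ρ2(q) • p)`: for every `H2`-invariant `f_{H2} : X × M1 → Y` there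
is a unique `H1`-invariant `f_{H1} : X × M2 → Y` with `f_{H1} ∘ T1 = f_{H2} ∘ T2`. -/
theorem reduction_flexibility {G X M1 M2 Y : Type*}
    [Group G] [MulAction G X] [MulAction G M1] [MulAction G M2]
    (htrans1 : ∀ p q : M1, ∃ g : G, g • p = q)
    (htrans2 : ∀ p q : M2, ∃ g : G, g • p = q)
    (p0 : M1) (q0 : M2)
    (ρ1 : M1 → G) (hρ1 : ∀ p : M1, ρ1 p • p = p0)
    (ρ2 : M2 → G) (hρ2 : ∀ q : M2, ρ2 q • q = q0)
    (fH2 : X × M1 → Y)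
    (hfH2 : ∀ h ∈ MulAction.stabilizer G q0, ∀ (x : X) (p : M1),
      fH2 (h • x, h • p) = fH2 (x, p)) :
    ∃! fH1 : X × M2 → Y,
      (∀ h ∈ MulAction.stabilizer G p0, ∀ (x : X) (q : M2),
        fH1 (h • x, h • q) = fH1 (x, q)) ∧
      (∀ (x : X) (p : M1) (q : M2),
        fH1 (ρ1 p • x, ρ1 p • q) = fH2 (ρ2 q • x, ρ2 q • p)) :=
  reduction_flexibility_general p0 q0 ρ1 hρ1 ρ2 hρ2 fH2 hfH2
end

section
/- Let n ≥ 1 and let t = (t₁, …, tₙ) and t' = (t'₁, …, t'ₙ) be two n-tuples of points in n-dimensional Euclidean space ℝⁿ. Then there exists a bijective affine isometry g : ℝⁿ → ℝⁿ with g(tᵢ) = t'ᵢ for all i if and only if there exists a bijective affine isometry g : ℝⁿ → ℝⁿ whose linear part has determinant 1 and g(tᵢ) = t'ᵢ for all i. Consequently, every function on n-tuples of points of ℝⁿ that is invariant under the diagonal SE(n)-action is also invariant under the diagonal E(n)-action. -/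
/-!
A linear isometry has determinant `±1`. If `g` maps the points `tᵢ` to `t'ᵢ` and has
determinant `-1`, note that `n` points of `ℝⁿ` span an affine subspace of dimension at most
`n - 1`, so they lie in an affine hyperplane; following `g` by the reflection in that
hyperplane fixes every `t'ᵢ` and changes the sign of the determinant.
-/

open Module EuclideanGeometry

section
variable {V P : Type*} [NormedAddCommGroup V] [InnerProductSpace ℝ V] [MetricSpace P]
  [NormedAddTorsor V P]

theorem LinearIsometryEquiv.det_eq_one_or_eq_neg_one [FiniteDimensional ℝ V] (f : V ≃ₗᵢ[ℝ] V) :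
    LinearMap.det (f.toLinearEquiv : V →ₗ[ℝ] V) = 1 ∨
      LinearMap.det (f.toLinearEquiv : V →ₗ[ℝ] V) = -1 := by
  have h := f.toLinearIsometry.normDet_eq_one
  rw [LinearMap.normDet_eq_norm_det, Real.norm_eq_abs] at h
  exact (abs_eq zero_le_one).mp h

theorem AffineIsometryEquiv.linearIsometryEquiv_trans (e e' : P ≃ᵃⁱ[ℝ] P) :
    (e.trans e').linearIsometryEquiv = e.linearIsometryEquiv.trans e'.linearIsometryEquiv :=
  rfl

theorem EuclideanGeometry.det_reflection (s : AffineSubspace ℝ P) [Nonempty s]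
    [s.direction.HasOrthogonalProjection] [FiniteDimensional ℝ V] :
    LinearMap.det ((reflection s).linearIsometryEquiv.toLinearEquiv : V →ₗ[ℝ] V) =
      (-1) ^ finrank ℝ s.directionᗮ :=
  s.direction.det_reflection

theorem vectorSpan_range_ne_top_of_card_le {k ι W Q : Type*} [DivisionRing k] [AddCommGroup W]
    [Module k W] [AddTorsor W Q] [Fintype ι] [Nonempty ι] (p : ι → Q)
    (hcard : Fintype.card ι ≤ finrank k W) : vectorSpan k (Set.range p) ≠ ⊤ := by
  intro htop
  have hpos := Fintype.card_pos (α := ι)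
  have hle := finrank_vectorSpan_range_le k p (Nat.sub_add_cancel hpos).symm
  rw [htop, finrank_top] at hle
  omega

theorem exists_affineIsometryEquiv_det_eq_neg_one_fixing [FiniteDimensional ℝ V] {s : Set P}
    {p₀ : P} (hp₀ : p₀ ∈ s) (hs : vectorSpan ℝ s ≠ ⊤) :
    ∃ r : P ≃ᵃⁱ[ℝ] P, LinearMap.det (r.linearIsometryEquiv.toLinearEquiv : V →ₗ[ℝ] V) = -1 ∧
      ∀ p ∈ s, r p = p := by
  obtain ⟨v, hv, hv0⟩ := (Submodule.ne_bot_iff _).mp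
    ((Submodule.orthogonal_eq_bot_iff).not.mpr hs)
  set H := AffineSubspace.mk' p₀ (ℝ ∙ v)ᗮ
  have hH : H.direction = (ℝ ∙ v)ᗮ := AffineSubspace.direction_mk' _ _
  have : Nonempty H := ⟨⟨p₀, AffineSubspace.self_mem_mk' _ _⟩⟩
  have hsH : vectorSpan ℝ s ≤ (ℝ ∙ v)ᗮ :=
    (vectorSpan ℝ s).le_orthogonal_orthogonal.trans
      (Submodule.orthogonal_le ((Submodule.span_singleton_le_iff_mem _ _).mpr hv))
  refine ⟨reflection H, ?_, fun p hp => (reflection_eq_self_iff p).mpr ?_⟩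
  · rw [det_reflection, hH, Submodule.orthogonal_orthogonal, finrank_span_singleton hv0, pow_one]
  · exact (AffineSubspace.mem_mk').mpr (hsH (vsub_mem_vectorSpan ℝ hp hp₀))

theorem AffineIsometryEquiv.exists_det_eq_one_apply_eq_apply [FiniteDimensional ℝ V] {ι : Type*}
    [Fintype ι] [Nonempty ι] (hcard : Fintype.card ι ≤ finrank ℝ V) (g : P ≃ᵃⁱ[ℝ] P) (t : ι → P) :
    ∃ g' : P ≃ᵃⁱ[ℝ] P, LinearMap.det (g'.linearIsometryEquiv.toLinearEquiv : V →ₗ[ℝ] V) = 1 ∧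
      ∀ i, g' (t i) = g (t i) := by
  rcases g.linearIsometryEquiv.det_eq_one_or_eq_neg_one with hg | hg
  · exact ⟨g, hg, fun _ => rfl⟩
  obtain ⟨r, hr, hr_fix⟩ := exists_affineIsometryEquiv_det_eq_neg_one_fixing
    (Set.mem_range_self (Classical.arbitrary ι))
    (vectorSpan_range_ne_top_of_card_le (fun i => g (t i)) hcard)
  refine ⟨g.trans r, ?_, fun i => hr_fix _ (Set.mem_range_self i)⟩
  rw [AffineIsometryEquiv.linearIsometryEquiv_trans, LinearIsometryEquiv.toLinearEquiv_trans,
    LinearEquiv.coe_trans, LinearMap.det_comp, hr, hg, neg_one_mul, neg_neg]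

end

/-- For `n`-tuples of points in `ℝⁿ`, the `E(n)`-orbit coincides with the `SE(n)`-orbit;
consequently every `SE(n)`-invariant function of `n`-tuples is `E(n)`-invariant. -/
theorem ntuple_En_orbit_eq_SEn_orbit {Y : Type*} (n : ℕ) (hn : 1 ≤ n) :
    (∀ t t' : Fin n → EuclideanSpace ℝ (Fin n),
      (∃ g : EuclideanSpace ℝ (Fin n) ≃ᵃⁱ[ℝ] EuclideanSpace ℝ (Fin n),
        ∀ i : Fin n, g (t i) = t' i) ↔
      (∃ g : EuclideanSpace ℝ (Fin n) ≃ᵃⁱ[ℝ] EuclideanSpace ℝ (Fin n),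
        LinearMap.det (g.linearIsometryEquiv.toLinearEquiv :
          EuclideanSpace ℝ (Fin n) →ₗ[ℝ] EuclideanSpace ℝ (Fin n)) = 1 ∧
        ∀ i : Fin n, g (t i) = t' i)) ∧
    (∀ f : (Fin n → EuclideanSpace ℝ (Fin n)) → Y,
      (∀ g : EuclideanSpace ℝ (Fin n) ≃ᵃⁱ[ℝ] EuclideanSpace ℝ (Fin n),
        LinearMap.det (g.linearIsometryEquiv.toLinearEquiv :
          EuclideanSpace ℝ (Fin n) →ₗ[ℝ] EuclideanSpace ℝ (Fin n)) = 1 →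
        ∀ t : Fin n → EuclideanSpace ℝ (Fin n), f (fun i => g (t i)) = f t) →
      ∀ (g : EuclideanSpace ℝ (Fin n) ≃ᵃⁱ[ℝ] EuclideanSpace ℝ (Fin n))
        (t : Fin n → EuclideanSpace ℝ (Fin n)), f (fun i => g (t i)) = f t) := by
  have : Nonempty (Fin n) := ⟨⟨0, hn⟩⟩
  have hcard : Fintype.card (Fin n) ≤ finrank ℝ (EuclideanSpace ℝ (Fin n)) := by simp
  refine ⟨fun t t' => ⟨fun ⟨g, hg⟩ => ?_, fun ⟨g, _, hg⟩ => ⟨g, hg⟩⟩, fun f hf g t => ?_⟩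
  · obtain ⟨g', hdet, hg'⟩ := AffineIsometryEquiv.exists_det_eq_one_apply_eq_apply hcard g t
    exact ⟨g', hdet, fun i => (hg' i).trans (hg i)⟩
  · obtain ⟨g', hdet, hg'⟩ := AffineIsometryEquiv.exists_det_eq_one_apply_eq_apply hcard g t
    simp_rw [← hg']
    exact hf g' hdet t
end

section
/- Let the two-element group C₂ = {1, σ} act on ℝ² by σ · (a, b) := (a, −b), and diagonally on ℝ² × ℝ². For s = (s₁, s₂) and r = (r₁, r₂) in ℝ², define F(s, r) := (s₁, r₁, s₂², r₂², (s₂ − r₂)²) ∈ ℝ⁵. Then F separates the orbits of this action: for all pairs (s, r) and (s', r') in ℝ² × ℝ², F(s, r) = F(s', r') if and only if (s', r') = (s, r) or (s', r') = (σ · s, σ · r). -/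
section SignAmbiguity

variable {R : Type*} [CommRing R] [NoZeroDivisors R] [NeZero (2 : R)] {a b a' b' : R}

/-- Given the squares, `(a - b) ^ 2 = a ^ 2 - 2 a b + b ^ 2` determines the product `a b`. -/
theorem mul_eq_mul_of_sq_eq_sq_of_sq_sub_eq_sq (ha : a' ^ 2 = a ^ 2) (hb : b' ^ 2 = b ^ 2)
    (hab : (a' - b') ^ 2 = (a - b) ^ 2) : a' * b' = a * b := by
  refine mul_left_cancel₀ (two_ne_zero (α := R)) ?_
  linear_combination ha + hb - hab

/-- Squares fix each coordinate up to sign; the product forces the two signs to agree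
unless one coordinate vanishes, where the sign is irrelevant. -/
theorem eq_or_eq_neg_of_sq_eq_sq_of_mul_eq_mul (ha : a' ^ 2 = a ^ 2) (hb : b' ^ 2 = b ^ 2)
    (hab : a' * b' = a * b) : (a', b') = (a, b) ∨ (a', b') = -(a, b) := by
  have mul_eq_zero_of_mul_eq_neg (h : a * b = -(a * b)) : a = 0 ∨ b = 0 :=
    mul_eq_zero.1 <| (mul_eq_zero.1 (by linear_combination h : (2 : R) * (a * b) = 0)).resolve_left
      two_ne_zero
  rcases sq_eq_sq_iff_eq_or_eq_neg.1 ha with rfl | rfl <;>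
    rcases sq_eq_sq_iff_eq_or_eq_neg.1 hb with rfl | rfl
  · exact .inl rfl
  · rcases mul_eq_zero_of_mul_eq_neg (by linear_combination -hab) with rfl | rfl <;> simp
  · rcases mul_eq_zero_of_mul_eq_neg (by linear_combination -hab) with rfl | rfl <;> simp
  · exact .inr rfl

end SignAmbiguity

/-- The invariant map `F(s, r) = (s₁, r₁, s₂², r₂², (s₂ − r₂)²)` separates the orbits of the
diagonal action of `C₂ = {1, σ}` on `ℝ² × ℝ²`, where `σ · (a, b) = (a, −b)`. -/
theorem C2_invariants_separate_orbits_plane (s r s' r' : ℝ × ℝ) :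
    ((s.1, r.1, s.2 ^ 2, r.2 ^ 2, (s.2 - r.2) ^ 2) =
      ((s'.1, r'.1, s'.2 ^ 2, r'.2 ^ 2, (s'.2 - r'.2) ^ 2) : ℝ × ℝ × ℝ × ℝ × ℝ)) ↔
    ((s', r') = (s, r) ∨ (s', r') = (((s.1, -s.2) : ℝ × ℝ), ((r.1, -r.2) : ℝ × ℝ))) := by
  obtain ⟨a, x⟩ := s
  obtain ⟨b, y⟩ := r
  obtain ⟨a', x'⟩ := s'
  obtain ⟨b', y'⟩ := r'
  simp only [Prod.mk.injEq]
  constructor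
  · rintro ⟨rfl, rfl, hx, hy, hxy⟩
    have hsigns := eq_or_eq_neg_of_sq_eq_sq_of_mul_eq_mul hx.symm hy.symm
      (mul_eq_mul_of_sq_eq_sq_of_sq_sub_eq_sq hx.symm hy.symm hxy.symm)
    simp only [Prod.neg_mk, Prod.mk.injEq] at hsigns
    tauto
  · rintro (⟨⟨rfl, rfl⟩, rfl, rfl⟩ | ⟨⟨rfl, rfl⟩, rfl, rfl⟩) <;>
      exact ⟨rfl, rfl, by ring, by ring, by ring⟩
end

section
/- Let S² = { x ∈ ℝ³ : x₁² + x₂² + x₃² = 1 } be the unit sphere, and let the two-element group C₂ = {1, σ} act on S² by σ · (a, b, c) := (a, b, −c), and diagonally on S² × S². For s = (s₁, s₂, s₃) and r = (r₁, r₂, r₃) in S², define F(s, r) := (s₁, s₂, r₁, r₂, s₃·r₃) ∈ ℝ⁵. Then F separates the orbits of this action: for all pairs (s, r) and (s', r') in S² × S², F(s, r) = F(s', r') if and only if (s', r') = (s, r) or (s', r') = (σ · s, σ · r). -/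
/-! Equal invariants give equal first two coordinates of `s` and `r`; on the sphere the third
coordinates then agree up to sign, and the product `s₃ r₃` forces the two signs to agree
(when one of `s₃`, `r₃` vanishes, either sign choice works). -/

theorem sq_eq_sq_and_mul_eq_mul_iff {R : Type*} [CommRing R] [NoZeroDivisors R] {a b a' b' : R} :
    a' ^ 2 = a ^ 2 ∧ b' ^ 2 = b ^ 2 ∧ a' * b' = a * b ↔
      (a' = a ∧ b' = b) ∨ (a' = -a ∧ b' = -b) := by
  constructor
  · rintro ⟨ha, hb, hab⟩
    rcases sq_eq_sq_iff_eq_or_eq_neg.1 ha with rfl | rfl <;>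
      rcases sq_eq_sq_iff_eq_or_eq_neg.1 hb with rfl | rfl
    · exact .inl ⟨rfl, rfl⟩
    · by_cases ha0 : a' = 0
      · exact .inr ⟨by simp [ha0], rfl⟩
      · exact .inl ⟨rfl, mul_left_cancel₀ ha0 hab⟩
    · by_cases hb0 : b' = 0
      · exact .inr ⟨rfl, by simp [hb0]⟩
      · exact .inl ⟨mul_right_cancel₀ hb0 hab, rfl⟩
    · exact .inr ⟨rfl, rfl⟩
  · rintro (⟨rfl, rfl⟩ | ⟨rfl, rfl⟩) <;> simp

theorem snd_snd_sq_eq_of_sphere {s s' : ℝ × ℝ × ℝ}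
    (hs : s.1 ^ 2 + s.2.1 ^ 2 + s.2.2 ^ 2 = 1) (hs' : s'.1 ^ 2 + s'.2.1 ^ 2 + s'.2.2 ^ 2 = 1)
    (h₁ : s.1 = s'.1) (h₂ : s.2.1 = s'.2.1) : s'.2.2 ^ 2 = s.2.2 ^ 2 := by
  rw [h₁, h₂] at hs
  linarith

/-- The invariant map `F(s, r) = (s₁, s₂, r₁, r₂, s₃·r₃)` separates the orbits of the diagonal
action of `C₂ = {1, σ}` on `S² × S²`, where `σ · (a, b, c) = (a, b, −c)` and
`S² = {x ∈ ℝ³ : x₁² + x₂² + x₃² = 1}`. -/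
theorem C2_invariants_separate_orbits_sphere (s r s' r' : ℝ × ℝ × ℝ)
    (hs : s.1 ^ 2 + s.2.1 ^ 2 + s.2.2 ^ 2 = 1)
    (hr : r.1 ^ 2 + r.2.1 ^ 2 + r.2.2 ^ 2 = 1)
    (hs' : s'.1 ^ 2 + s'.2.1 ^ 2 + s'.2.2 ^ 2 = 1)
    (hr' : r'.1 ^ 2 + r'.2.1 ^ 2 + r'.2.2 ^ 2 = 1) :
    ((s.1, s.2.1, r.1, r.2.1, s.2.2 * r.2.2) =
      ((s'.1, s'.2.1, r'.1, r'.2.1, s'.2.2 * r'.2.2) : ℝ × ℝ × ℝ × ℝ × ℝ)) ↔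
    ((s', r') = (s, r) ∨
      (s' = ((s.1, s.2.1, -s.2.2) : ℝ × ℝ × ℝ) ∧ r' = ((r.1, r.2.1, -r.2.2) : ℝ × ℝ × ℝ))) := by
  simp only [Prod.mk.injEq]
  constructor
  · rintro ⟨h₁, h₂, h₃, h₄, h₅⟩
    have hs₃ := snd_snd_sq_eq_of_sphere hs hs' h₁ h₂
    have hr₃ := snd_snd_sq_eq_of_sphere hr hr' h₃ h₄
    rcases sq_eq_sq_and_mul_eq_mul_iff.1 ⟨hs₃, hr₃, h₅.symm⟩ with ⟨e₁, e₂⟩ | ⟨e₁, e₂⟩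
    · exact .inl ⟨Prod.ext h₁.symm (Prod.ext h₂.symm e₁), Prod.ext h₃.symm (Prod.ext h₄.symm e₂)⟩
    · exact .inr ⟨Prod.ext h₁.symm (Prod.ext h₂.symm e₁), Prod.ext h₃.symm (Prod.ext h₄.symm e₂)⟩
  · rintro (⟨rfl, rfl⟩ | ⟨rfl, rfl⟩) <;> simp
end

section
/- Let X be a topological space on which a group G acts, let K ⊆ X be a compact subset, and let f_inv : X → ℝᴺ be a continuous G-invariant map that separates orbits, i.e. f_inv(x) = f_inv(y) implies y = g · x for some g ∈ G. Then for every continuous G-invariant function f : X → ℝ there exists a continuous function h : ℝᴺ → ℝ such that f(x) = h(f_inv(x)) for all x ∈ K. -/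
open Topology Set

universe u v

/- On the compact set `K`, the map `finv` is a closed map onto its image, hence a
quotient map. An invariant `f` is constant on its fibres because these are contained in orbits,
so `f` descends to a continuous function on the compact, hence closed, set `finv '' K ⊆ ℝᴺ`,
which Tietze's theorem extends to all of `ℝᴺ`. -/

theorem IsCompact.isQuotientMap_imageFactorization {X Y : Type*} [TopologicalSpace X]
    [TopologicalSpace Y] [T2Space Y] {p : X → Y} {K : Set X} (hK : IsCompact K)
    (hp : ContinuousOn p K) : IsQuotientMap (K.imageFactorization p) := by
  have : CompactSpace K := isCompact_iff_compactSpace.mp hK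
  exact IsQuotientMap.of_surjective_continuous imageFactorization_surjective
    (hp.domRestrict.subtype_mk _)

theorem IsCompact.exists_continuousMap_eq_comp {X : Type*} {Y : Type u} {Z : Type v}
    [TopologicalSpace X] [TopologicalSpace Y] [T2Space Y] [NormalSpace Y] [TopologicalSpace Z]
    [TietzeExtension.{u, v} Z]
    {p : X → Y} {f : X → Z} {K : Set X} (hK : IsCompact K) (hp : ContinuousOn p K)
    (hf : ContinuousOn f K) (hfib : ∀ x ∈ K, ∀ y ∈ K, p x = p y → f x = f y) :
    ∃ h : C(Y, Z), ∀ x ∈ K, f x = h (p x) := by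
  have hq := hK.isQuotientMap_imageFactorization hp
  let q : C(K, p '' K) := ⟨K.imageFactorization p, hq.continuous⟩
  let f₀ : C(K, Z) := ⟨K.domRestrict f, hf.domRestrict⟩
  have hfac : Function.FactorsThrough f₀ q :=
    fun a b hab ↦ hfib a a.2 b b.2 (congrArg Subtype.val hab)
  let h₀ : C(p '' K, Z) := IsQuotientMap.lift (f := q) hq f₀ hfac
  obtain ⟨h, hh₀⟩ := h₀.exists_restrict_eq (hK.image_of_continuousOn hp).isClosed
  refine ⟨h, fun x hx ↦ ?_⟩
  calc f x = h₀ (q ⟨x, hx⟩) :=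
        (DFunLike.congr_fun (IsQuotientMap.lift_comp (f := q) hq f₀ hfac) ⟨x, hx⟩).symm
    _ = h (p x) := by rw [← hh₀]; rfl

theorem invariant_factors_through_separating_invariants_general
    {X G : Type*} [TopologicalSpace X] [Group G] [MulAction G X]
    (K : Set X) (hK : IsCompact K) (N : ℕ)
    (finv : X → EuclideanSpace ℝ (Fin N)) (hfinv_cont : Continuous finv)
    (hfinv_sep : ∀ x y : X, finv x = finv y → ∃ g : G, y = g • x)
    (f : X → ℝ) (hf_cont : Continuous f)
    (hf_inv : ∀ (g : G) (x : X), f (g • x) = f x) :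
    ∃ h : EuclideanSpace ℝ (Fin N) → ℝ, Continuous h ∧ ∀ x ∈ K, f x = h (finv x) := by
  have hfib : ∀ x ∈ K, ∀ y ∈ K, finv x = finv y → f x = f y := fun x _ y _ hxy ↦ by
    obtain ⟨g, rfl⟩ := hfinv_sep x y hxy
    exact (hf_inv g x).symm
  obtain ⟨h, hh⟩ :=
    hK.exists_continuousMap_eq_comp hfinv_cont.continuousOn hf_cont.continuousOn hfib
  exact ⟨h, h.continuous, hh⟩

/-- **Maximal expressivity.** If `f_inv : X → ℝᴺ` is a continuous `G`-invariant map that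
separates orbits, then every continuous `G`-invariant `f : X → ℝ` factors through `f_inv` via
a continuous function `h : ℝᴺ → ℝ` on any compact set `K ⊆ X`. -/
theorem invariant_factors_through_separating_invariants
    {X G : Type*} [TopologicalSpace X] [Group G] [MulAction G X]
    (K : Set X) (hK : IsCompact K) (N : ℕ)
    (finv : X → EuclideanSpace ℝ (Fin N)) (hfinv_cont : Continuous finv)
    (hfinv_inv : ∀ (g : G) (x : X), finv (g • x) = finv x)
    (hfinv_sep : ∀ x y : X, finv x = finv y → ∃ g : G, y = g • x)
    (f : X → ℝ) (hf_cont : Continuous f)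
    (hf_inv : ∀ (g : G) (x : X), f (g • x) = f x) :
    ∃ h : EuclideanSpace ℝ (Fin N) → ℝ, Continuous h ∧ ∀ x ∈ K, f x = h (finv x) :=
  invariant_factors_through_separating_invariants_general K hK N finv hfinv_cont hfinv_sep f hf_cont
    hf_inv
end
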